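/- arXiv:2406.04914 — 8 statements merged into one kernel-verified Lean document; each statement's English description precedes it below -/
import Mathlib

section
/- Let N, K, s be positive integers with s = (N/K)·log(1/ε) for some ε ∈ (0,1), and let S*, S be subsets of a ground set V of size N with |S* \ S| ≤ K. If R is a uniformly random subset of V \ S of size s, then Pr[R ∩ (S* \ S) ≠ ∅] ≥ (1-ε)·|S* \ S|/K. -/
/-!
The sample misses `S* \ S` exactly when it is an `s`-subset of `(V \ S) \ (S* \ S)`, so with
`n = |V \ S|` and `k = |S* \ S|` the miss probability is `C(n-k, s) / C(n, s) ≤ (1 - k/n)^s`.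
Since `n ≤ N` and `1 - x ≤ e^{-x}`, this is at most `e^{-sk/N}`. The map `k ↦ 1 - e^{-sk/N}` is
concave, so on `[0, K]` it lies above its chord through `0` and `K`, whose value at `K` is
`1 - ε` by the choice of `s`.
-/

open Finset Real

namespace Nat

theorem descFactorial_sub_mul_pow_le (n k s : ℕ) :
    (n - k).descFactorial s * n ^ s ≤ n.descFactorial s * (n - k) ^ s := by
  rw [descFactorial_eq_prod_range, descFactorial_eq_prod_range, pow_eq_prod_const,
    pow_eq_prod_const, ← prod_mul_distrib, ← prod_mul_distrib]
  refine prod_le_prod' fun i _ => ?_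
  rcases le_or_gt (k + i) n with h | h
  · zify [h, (by omega : i ≤ n), (by omega : k ≤ n), (by omega : i ≤ n - k)]
    nlinarith [mul_nonneg (Int.natCast_nonneg i) (Int.natCast_nonneg k)]
  · simp [(by omega : n - k - i = 0)]

theorem choose_sub_mul_pow_le (n k s : ℕ) :
    (n - k).choose s * n ^ s ≤ n.choose s * (n - k) ^ s := by
  have h := descFactorial_sub_mul_pow_le n k s
  rw [descFactorial_eq_factorial_mul_choose, descFactorial_eq_factorial_mul_choose,
    mul_assoc, mul_assoc] at h
  exact le_of_mul_le_mul_left h (factorial_pos s)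

end Nat

theorem choose_sub_le_choose_mul_exp {n k N : ℕ} (hkn : k ≤ n) (hnN : n ≤ N) (s : ℕ) :
    ((n - k).choose s : ℝ) ≤ n.choose s * exp (-(s / N * k)) := by
  rcases Nat.eq_zero_or_pos n with rfl | hn
  · simp [Nat.le_zero.mp hkn]
  have hkn' : (k : ℝ) ≤ n := by exact_mod_cast hkn
  have hratio : ((n : ℝ) - k) / n ≤ exp (-(k / N)) :=
    calc ((n : ℝ) - k) / n = 1 - k / n := by field_simp
      _ ≤ 1 - k / N := by gcongr
      _ ≤ exp (-(k / N)) := one_sub_le_exp_neg _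
  have hcount : ((n - k).choose s : ℝ) * (n : ℝ) ^ s ≤ n.choose s * ((n : ℝ) - k) ^ s := by
    have h := Nat.choose_sub_mul_pow_le n k s
    rw [← Nat.cast_le (α := ℝ)] at h
    push_cast [Nat.cast_sub hkn] at h
    exact h
  calc ((n - k).choose s : ℝ) ≤ n.choose s * (((n : ℝ) - k) / n) ^ s := by
        rwa [div_pow, mul_div_assoc', le_div_iff₀ (by positivity)]
    _ ≤ n.choose s * exp (-(k / N)) ^ s := by gcongr
    _ = n.choose s * exp (-(s / N * k)) := by
        rw [← exp_nat_mul]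
        ring_nf

theorem div_mul_one_sub_exp_le {x K : ℝ} (hx : 0 ≤ x) (hxK : x ≤ K) (c : ℝ) :
    x / K * (1 - exp (-(c * K))) ≤ 1 - exp (-(c * x)) := by
  rcases hx.eq_or_lt with rfl | hx
  · simp
  have hK : 0 < K := hx.trans_le hxK
  have hratio : x / K ≤ 1 := (div_le_one hK).mpr hxK
  have hconv := convexOn_exp.2 (Set.mem_univ (-(c * K))) (Set.mem_univ 0)
    (div_nonneg hx.le hK.le) (sub_nonneg.mpr hratio) (add_sub_cancel _ _)
  have hpt : (x / K) • -(c * K) + (1 - x / K) • (0 : ℝ) = -(c * x) := by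
    simp only [smul_eq_mul, mul_zero, add_zero]
    field_simp
  rw [hpt, exp_zero, smul_eq_mul, smul_eq_mul, mul_one] at hconv
  linarith

theorem card_filter_not_inter_nonempty_powersetCard {α : Type*} [DecidableEq α]
    (A D : Finset α) (s : ℕ) :
    #{R ∈ A.powersetCard s | ¬ (R ∩ D).Nonempty} = (#(A \ D)).choose s := by
  rw [← card_powersetCard]
  congr 1
  ext R
  simp only [mem_filter, mem_powersetCard, not_nonempty_iff_eq_empty,
    ← disjoint_iff_inter_eq_empty, subset_sdiff]
  tauto

theorem card_filter_inter_nonempty_powersetCard {α : Type*} [DecidableEq α]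
    {A D : Finset α} (hDA : D ⊆ A) (s : ℕ) :
    #{R ∈ A.powersetCard s | (R ∩ D).Nonempty} = (#A).choose s - (#A - #D).choose s := by
  have h := card_filter_add_card_filter_not (s := A.powersetCard s)
    (p := fun R => (R ∩ D).Nonempty)
  rw [card_filter_not_inter_nonempty_powersetCard, card_powersetCard,
    card_sdiff_of_subset hDA] at h
  omega

theorem exp_neg_eq_of_eq_mul_log {N K s ε : ℝ} (hN : 0 < N) (hK : 0 < K) (hε : 0 < ε)
    (hs : s = N / K * log (1 / ε)) :
    exp (-(s / N * K)) = ε := by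
  have : -(s / N * K) = log ε := by
    rw [hs, one_div, log_inv]
    field_simp
  rw [this, exp_log hε]

theorem stmt_2_general {α : Type*} [DecidableEq α] (V Sstar S : Finset α)
    (N K s : ℕ) (hN : 0 < N) (hK : 0 < K)
    (hVN : V.card = N) (hSstar : Sstar ⊆ V)
    (hdK : (Sstar \ S).card ≤ K)
    (ε : ℝ) (hε : ε ∈ Set.Ioo (0:ℝ) 1)
    (hsval : (s : ℝ) = ((N : ℝ) / K) * Real.log (1 / ε))
    (hsle : s ≤ (V \ S).card) :
    ((((V \ S).powersetCard s).filter (fun R => (R ∩ (Sstar \ S)).Nonempty)).card : ℝ) /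
        (((V \ S).powersetCard s).card : ℝ)
      ≥ (1 - ε) * ((Sstar \ S).card : ℝ) / K := by
  have hDA : Sstar \ S ⊆ V \ S := sdiff_subset_sdiff hSstar le_rfl
  have hkn := card_le_card hDA
  have hnN : #(V \ S) ≤ N := hVN ▸ card_le_card sdiff_subset
  have htotal : (0 : ℝ) < (#(V \ S)).choose s := by exact_mod_cast Nat.choose_pos hsle
  have hmiss := choose_sub_le_choose_mul_exp hkn hnN s
  have hchord := div_mul_one_sub_exp_le (Nat.cast_nonneg #(Sstar \ S))
    (Nat.cast_le.mpr hdK) ((s : ℝ) / N)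
  rw [exp_neg_eq_of_eq_mul_log (Nat.cast_pos.mpr hN) (Nat.cast_pos.mpr hK) hε.1 hsval] at hchord
  rw [card_filter_inter_nonempty_powersetCard hDA, card_powersetCard,
    Nat.cast_sub (Nat.choose_le_choose s (Nat.sub_le _ _)), ge_iff_le, le_div_iff₀ htotal]
  calc (1 - ε) * (#(Sstar \ S) : ℝ) / K * (#(V \ S)).choose s
      = #(Sstar \ S) / K * (1 - ε) * (#(V \ S)).choose s := by ring
    _ ≤ (1 - exp (-(s / N * #(Sstar \ S)))) * (#(V \ S)).choose s := by gcongr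
    _ ≤ _ := by linarith

/-- Sampling lemma: a uniformly random `s`-subset `R` of `V \ S` hits `S* \ S`
with probability at least `(1-ε)·|S* \ S|/K`, where `s = (N/K)·log(1/ε)`.
The probability is expressed as the ratio of the number of favorable `s`-subsets
to the total number of `s`-subsets of `V \ S`. -/
theorem stmt_2 {α : Type*} [DecidableEq α] (V Sstar S : Finset α)
    (N K s : ℕ) (hN : 0 < N) (hK : 0 < K) (hs : 0 < s)
    (hVN : V.card = N) (hSstar : Sstar ⊆ V) (hS : S ⊆ V)
    (hdK : (Sstar \ S).card ≤ K)
    (ε : ℝ) (hε : ε ∈ Set.Ioo (0:ℝ) 1)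
    (hsval : (s : ℝ) = ((N : ℝ) / K) * Real.log (1 / ε))
    (hsle : s ≤ (V \ S).card) :
    ((((V \ S).powersetCard s).filter (fun R => (R ∩ (Sstar \ S)).Nonempty)).card : ℝ) /
        (((V \ S).powersetCard s).card : ℝ)
      ≥ (1 - ε) * ((Sstar \ S).card : ℝ) / K :=
  stmt_2_general V Sstar S N K s hN hK hVN hSstar hdK ε hε hsval hsle
end

section
/- Let F : Finset V → ℝ be monotone nonnegative with F(∅) = 0, let K be a positive integer, α ∈ (0,1], and ε ∈ [0,1). Suppose a sequence of sets ∅ = S₀ ⊆ S₁ ⊆ ... ⊆ S_K (random, with |S_i| = i) satisfies E[F(S_{i+1}) - F(S_i)] ≥ (α(1-ε)/K)·(F(S*) - E[F(S_i)]) for all 0 ≤ i < K, where S* is a fixed set with F(S*) ≥ F(S_i) in expectation. Then E[F(S_K)] ≥ (1 - e^{-α(1-ε)})·F(S*) ≥ (1 - e^{-α} - ε)·F(S*). -/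
open MeasureTheory

/-- Inductive recurrence at the heart of the stochastic OMP guarantee:
a monotone nonnegative set function `F` with `F ∅ = 0`, a random nested sequence
of sets `S 0 ⊆ S 1 ⊆ … ⊆ S K` with `|S i| = i`, satisfying the expected-gain
recurrence, yields `E[F(S K)] ≥ (1 - e^{-α(1-ε)})·F(S*) ≥ (1 - e^{-α} - ε)·F(S*)`. -/
theorem stmt_5 {V : Type*} [DecidableEq V] {Ω : Type*} [MeasurableSpace Ω]
    (μ : Measure Ω) [IsProbabilityMeasure μ]
    (F : Finset V → ℝ) (K : ℕ) (hK : 0 < K)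
    (α ε : ℝ) (hα : α ∈ Set.Ioc (0:ℝ) 1) (hε : ε ∈ Set.Ico (0:ℝ) 1)
    (S : ℕ → Ω → Finset V) (Sstar : Finset V)
    (hmono : ∀ A B : Finset V, A ⊆ B → F A ≤ F B)
    (hnonneg : ∀ A : Finset V, 0 ≤ F A)
    (hF0 : F ∅ = 0)
    (h0 : ∀ ω, S 0 ω = ∅)
    (hchain : ∀ i ω, S i ω ⊆ S (i + 1) ω)
    (hcard : ∀ i ω, i ≤ K → (S i ω).card = i)
    (hint : ∀ i, Integrable (fun ω => F (S i ω)) μ)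
    (hdom : ∀ i ≤ K, ∫ ω, F (S i ω) ∂μ ≤ F Sstar)
    (hrec : ∀ i < K,
      (∫ ω, F (S (i + 1) ω) ∂μ) - ∫ ω, F (S i ω) ∂μ
        ≥ (α * (1 - ε) / K) * (F Sstar - ∫ ω, F (S i ω) ∂μ)) :
    (∫ ω, F (S K ω) ∂μ) ≥ (1 - Real.exp (-(α * (1 - ε)))) * F Sstar ∧
    (∫ ω, F (S K ω) ∂μ) ≥ (1 - Real.exp (-α) - ε) * F Sstar := by
  obtain ⟨hα0, hα1⟩ := hα
  obtain ⟨hε0, hε1⟩ := hε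
  have hKpos : (0:ℝ) < K := by exact_mod_cast hK
  set c : ℝ := α * (1 - ε) / K with hc
  have hc0 : 0 < c := div_pos (mul_pos hα0 (by linarith)) hKpos
  have hc1 : c ≤ 1 := by
    rw [hc, div_le_one hKpos]
    have hK1 : (1:ℝ) ≤ K := by exact_mod_cast hK
    nlinarith
  have hFs : 0 ≤ F Sstar := hnonneg _
  have key : ∀ i, i ≤ K → F Sstar - ∫ ω, F (S i ω) ∂μ ≤ (1 - c) ^ i * F Sstar := by
    intro i
    induction i with
    | zero =>
      intro _
      simp [h0, hF0]
    | succ n ih =>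
      intro hn
      have hrec' := hrec n (by omega)
      have ihn := ih (by omega)
      calc F Sstar - ∫ ω, F (S (n+1) ω) ∂μ
          ≤ (1 - c) * (F Sstar - ∫ ω, F (S n ω) ∂μ) := by linarith
        _ ≤ (1 - c) * ((1 - c) ^ n * F Sstar) :=
            mul_le_mul_of_nonneg_left ihn (by linarith)
        _ = (1 - c) ^ (n+1) * F Sstar := by ring
  have hKey := key K le_rfl
  have hexp : (1 - c) ^ K ≤ Real.exp (-(α * (1 - ε))) := by
    have h1 : (1 - c) ^ K ≤ (Real.exp (-c)) ^ K := by
      apply pow_le_pow_left₀ (by linarith)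
      linarith [Real.add_one_le_exp (-c)]
    have h2 : (Real.exp (-c)) ^ K = Real.exp (-(α * (1 - ε))) := by
      rw [← Real.exp_nat_mul]
      congr 1
      rw [hc]
      field_simp
    rw [h2] at h1
    exact h1
  have hprod : (1 - c) ^ K * F Sstar ≤ Real.exp (-(α * (1 - ε))) * F Sstar :=
    mul_le_mul_of_nonneg_right hexp hFs
  have first : (∫ ω, F (S K ω) ∂μ) ≥ (1 - Real.exp (-(α * (1 - ε)))) * F Sstar := by
    nlinarith
  refine ⟨first, ?_⟩
  have hz : Real.exp (-(α * (1 - ε))) ≤ Real.exp (-α) + ε := by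
    have hgm := Real.geom_mean_le_arith_mean2_weighted (w₁ := 1 - ε) (w₂ := ε)
      (p₁ := Real.exp (-α)) (p₂ := 1) (by linarith) hε0 (Real.exp_pos _).le zero_le_one
      (by ring)
    have heq : Real.exp (-(α * (1 - ε))) = (Real.exp (-α)) ^ (1 - ε) := by
      rw [← Real.exp_mul]
      ring_nf
    rw [heq]
    have hone : (1:ℝ) ^ (1 - ε) = 1 := Real.one_rpow _
    have hone2 : (1:ℝ) ^ ε = 1 := Real.one_rpow _
    have hexpos : (0:ℝ) < Real.exp (-α) := Real.exp_pos _
    nlinarith [mul_nonneg hε0 hexpos.le]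
  nlinarith
end

section
/- Let g : ℝ^N → ℝ be differentiable and satisfy g(y) ≥ g(x) + ⟨∇g(x), y - x⟩ - (U/2)‖y - x‖² for all x, y differing in at most one coordinate, with U > 0. Let γ_S minimize a convex objective -g over nonnegative vectors supported on S, and define F(S) = g(γ_S) - g(0). Then for any coordinate u ∉ S, F(S ∪ {u}) - F(S) ≥ (1/(2U))·(max(∂_u g(γ_S), 0))², where ∂_u g denotes the u-th partial derivative. -/
/-!
Moving from `γ_S` along the `u`-th coordinate by `η ≥ 0` stays feasible for the support
`S ∪ {u}`, and coordinate-wise smoothness gives `g(γ_S + η e_u) ≥ g(γ_S) + η ∂_u g(γ_S) - (U/2) η²`.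
Since `γ_{S ∪ {u}}` maximizes `g` there, the gain is at least the maximum of the right-hand
quadratic over `η ≥ 0`, attained at `η = max(∂_u g(γ_S), 0) / U`.
-/

open Finset

lemma mul_max_zero_self (a : ℝ) : a * max a 0 = max a 0 ^ 2 := by
  rcases le_total 0 a with ha | ha
  · rw [max_eq_left ha, sq]
  · simp [max_eq_right ha]

lemma quadratic_value_at_max_zero_div (a : ℝ) {U : ℝ} (hU : U ≠ 0) :
    a * (max a 0 / U) - U / 2 * (max a 0 / U) ^ 2 = 1 / (2 * U) * max a 0 ^ 2 := by
  rw [← mul_div_assoc, mul_max_zero_self]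
  field_simp
  ring

namespace EuclideanSpace

variable {ι : Type*} [DecidableEq ι]

lemma add_single_nonneg {x : EuclideanSpace ℝ ι} (hx : ∀ v, 0 ≤ x v) (u : ι) {η : ℝ}
    (hη : 0 ≤ η) (v : ι) : 0 ≤ (x + single u η) v := by
  rw [PiLp.add_apply, PiLp.single_apply]
  split_ifs <;> linarith [hx v]

lemma add_single_apply_of_notMem_insert {S : Finset ι} {x : EuclideanSpace ℝ ι}
    (hx : ∀ v ∉ S, x v = 0) (u : ι) (η : ℝ) {v : ι} (hv : v ∉ insert u S) :
    (x + single u η) v = 0 := by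
  rw [mem_insert, not_or] at hv
  rw [PiLp.add_apply, PiLp.single_apply, if_neg hv.1, hx v hv.2, add_zero]

lemma le_apply_add_single [Fintype ι] {g : EuclideanSpace ℝ ι → ℝ} {U : ℝ}
    (hsmooth : ∀ x y : EuclideanSpace ℝ ι, (∃ u : ι, ∀ v, v ≠ u → x v = y v) →
      g y ≥ g x + inner ℝ (gradient g x) (y - x) - U / 2 * ‖y - x‖ ^ 2)
    (x : EuclideanSpace ℝ ι) (u : ι) (η : ℝ) :
    g x + gradient g x u * η - U / 2 * η ^ 2 ≤ g (x + single u η) := by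
  have hcoord : ∀ v, v ≠ u → x v = (x + single u η) v := fun v hv => by
    rw [PiLp.add_apply, PiLp.single_apply, if_neg hv, add_zero]
  have h := hsmooth x (x + single u η) ⟨u, hcoord⟩
  rwa [add_sub_cancel_left, inner_single_right, PiLp.norm_single, Real.norm_eq_abs, sq_abs,
    conj_trivial, mul_comm η] at h

end EuclideanSpace

theorem stmt_9_general (N : ℕ) (g : EuclideanSpace ℝ (Fin N) → ℝ)
    (U : ℝ) (hU : 0 < U)
    (hsmooth : ∀ x y : EuclideanSpace ℝ (Fin N), (∃ u : Fin N, ∀ v, v ≠ u → x v = y v) →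
      g y ≥ g x + inner ℝ (gradient g x) (y - x) - U / 2 * ‖y - x‖ ^ 2)
    (S : Finset (Fin N)) (u : Fin N)
    (γS γSu : EuclideanSpace ℝ (Fin N))
    (hγS : ((∀ v, 0 ≤ γS v) ∧ ∀ v ∉ S, γS v = 0) ∧
      ∀ x : EuclideanSpace ℝ (Fin N), ((∀ v, 0 ≤ x v) ∧ ∀ v ∉ S, x v = 0) → g x ≤ g γS)
    (hγSu : ((∀ v, 0 ≤ γSu v) ∧ ∀ v ∉ insert u S, γSu v = 0) ∧
      ∀ x : EuclideanSpace ℝ (Fin N), ((∀ v, 0 ≤ x v) ∧ ∀ v ∉ insert u S, x v = 0) →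
        g x ≤ g γSu) :
    (g γSu - g 0) - (g γS - g 0) ≥ 1 / (2 * U) * (max (gradient g γS u) 0) ^ 2 := by
  obtain ⟨⟨hγS_nonneg, hγS_supp⟩, -⟩ := hγS
  set a := gradient g γS u
  set η := max a 0 / U
  have hη : 0 ≤ η := div_nonneg (le_max_right a 0) hU.le
  have hstep := EuclideanSpace.le_apply_add_single hsmooth γS u η
  have hopt : g (γS + EuclideanSpace.single u η) ≤ g γSu :=
    hγSu.2 _ ⟨EuclideanSpace.add_single_nonneg hγS_nonneg u hη,
      fun v hv => EuclideanSpace.add_single_apply_of_notMem_insert hγS_supp u η hv⟩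
  have hquad := quadratic_value_at_max_zero_div a hU.ne'
  linarith

/-- Marginal-gain lower bound (Lemma A2, abstract form): if `g` is differentiable
and satisfies the smoothness inequality with parameter `U` on pairs differing in
at most one coordinate, and `γS`, `γSu` maximize `g` over nonnegative vectors
supported on `S` and `S ∪ {u}` respectively, then
`F(S∪{u}) - F(S) ≥ (1/(2U))·(max(∂_u g(γS), 0))²`. -/
theorem stmt_9 (N : ℕ) (g : EuclideanSpace ℝ (Fin N) → ℝ) (hg : Differentiable ℝ g)
    (U : ℝ) (hU : 0 < U)
    (hsmooth : ∀ x y : EuclideanSpace ℝ (Fin N), (∃ u : Fin N, ∀ v, v ≠ u → x v = y v) →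
      g y ≥ g x + inner ℝ (gradient g x) (y - x) - U / 2 * ‖y - x‖ ^ 2)
    (S : Finset (Fin N)) (u : Fin N) (hu : u ∉ S)
    (γS γSu : EuclideanSpace ℝ (Fin N))
    (hγS : ((∀ v, 0 ≤ γS v) ∧ ∀ v ∉ S, γS v = 0) ∧
      ∀ x : EuclideanSpace ℝ (Fin N), ((∀ v, 0 ≤ x v) ∧ ∀ v ∉ S, x v = 0) → g x ≤ g γS)
    (hγSu : ((∀ v, 0 ≤ γSu v) ∧ ∀ v ∉ insert u S, γSu v = 0) ∧
      ∀ x : EuclideanSpace ℝ (Fin N), ((∀ v, 0 ≤ x v) ∧ ∀ v ∉ insert u S, x v = 0) →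
        g x ≤ g γSu) :
    (g γSu - g 0) - (g γS - g 0) ≥ 1 / (2 * U) * (max (gradient g γS u) 0) ^ 2 :=
  stmt_9_general N g U hU hsmooth S u γS γSu hγS hγSu
end

section
/- Let g : ℝ^N → ℝ be differentiable and u-strongly concave on the relevant domain: g(y) ≤ g(x) + ⟨∇g(x), y - x⟩ - (u/2)‖y - x‖² for x, y nonnegative with sparsity at most m̄. Let γ_S be the maximizer of g over nonnegative vectors supported on S (so KKT gives (γ_S)_j > 0 ⟹ ∂_j g(γ_S) = 0 and (γ_S)_j = 0, j ∈ S ⟹ ∂_j g(γ_S) ≤ 0). Then for S, A disjoint with |S| + |A| = m̄, and F(S) = g(γ_S) - g(0): F(S ∪ A) - F(S) ≤ (1/(2u))·Σ_{j∈A} (max(∂_j g(γ_S), 0))². -/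
/-!
Strong concavity between `γS` and `γSA` (both nonnegative, supported in `S ∪ A`, hence of
sparsity at most `m̄`) bounds `g γSA - g γS` by the quadratic model
`⟪∇g γS, γSA - γS⟫ - (u/2)‖γSA - γS‖²`, which splits into a sum over coordinates. Off `A` every
term is `≤ 0`: outside `S ∪ A` both vectors vanish, and on `S` complementary slackness gives
`∂_j g(γS) · (γSA_j - γS_j) ≤ 0`. On `A` we have `γS_j = 0`, and the term `a b - (u/2) b²` with
`b ≥ 0` is at most `max(a, 0)² / (2u)`.
-/

open Finset

lemma mul_sub_half_mul_sq_le {u a b : ℝ} (hu : 0 < u) (hb : 0 ≤ b) :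
    a * b - u / 2 * b ^ 2 ≤ max a 0 ^ 2 / (2 * u) := by
  have hab : a * b ≤ max a 0 * b := mul_le_mul_of_nonneg_right (le_max_left a 0) hb
  rw [le_div_iff₀ (by positivity)]
  nlinarith [sq_nonneg (max a 0 - u * b)]

lemma mul_sub_half_mul_sq_nonpos {u a b : ℝ} (hu : 0 ≤ u) (hab : a * b ≤ 0) :
    a * b - u / 2 * b ^ 2 ≤ 0 := by
  nlinarith [sq_nonneg b]

lemma card_filter_ne_zero_le {ι M : Type*} [Fintype ι] [Zero M] [DecidableEq M]
    {s : Finset ι} {x : ι → M} (hx : ∀ v ∉ s, x v = 0) : #{v | x v ≠ 0} ≤ #s :=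
  card_le_card fun v hv => by_contra fun hvs => (mem_filter.mp hv).2 (hx v hvs)

lemma EuclideanSpace.inner_sub_mul_norm_sq_eq_sum {ι : Type*} [Fintype ι]
    (d z : EuclideanSpace ℝ ι) (c : ℝ) :
    inner ℝ d z - c * ‖z‖ ^ 2 = ∑ j, (d j * z j - c * z j ^ 2) := by
  rw [← real_inner_self_eq_norm_sq, PiLp.inner_apply, PiLp.inner_apply, mul_sum,
    ← sum_sub_distrib]
  simp only [RCLike.inner_apply, conj_trivial, sq, mul_comm]

lemma mul_sub_nonpos_of_complementary_slackness {x d t : ℝ} (hx : 0 ≤ x)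
    (hpos : 0 < x → d = 0) (hzero : x = 0 → d ≤ 0) (ht : 0 ≤ t) : d * (t - x) ≤ 0 := by
  rcases hx.lt_or_eq with hx | hx
  · simp [hpos hx]
  · rw [← hx, sub_zero]
    exact mul_nonpos_of_nonpos_of_nonneg (hzero hx.symm) ht

theorem stmt_11_general (N : ℕ) (g : EuclideanSpace ℝ (Fin N) → ℝ)
    (u : ℝ) (hu : 0 < u) (mbar : ℕ)
    (hconc : ∀ x y : EuclideanSpace ℝ (Fin N),
      (∀ v, 0 ≤ x v) → (Finset.univ.filter (fun v => x v ≠ 0)).card ≤ mbar →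
      (∀ v, 0 ≤ y v) → (Finset.univ.filter (fun v => y v ≠ 0)).card ≤ mbar →
      g y ≤ g x + inner ℝ (gradient g x) (y - x) - u / 2 * ‖y - x‖ ^ 2)
    (S A : Finset (Fin N)) (hdisj : Disjoint S A) (hcard : S.card + A.card = mbar)
    (γS γSA : EuclideanSpace ℝ (Fin N))
    (hγS : ((∀ v, 0 ≤ γS v) ∧ ∀ v ∉ S, γS v = 0) ∧
      ∀ x : EuclideanSpace ℝ (Fin N), ((∀ v, 0 ≤ x v) ∧ ∀ v ∉ S, x v = 0) → g x ≤ g γS)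
    (hKKT₁ : ∀ j, 0 < γS j → gradient g γS j = 0)
    (hKKT₂ : ∀ j ∈ S, γS j = 0 → gradient g γS j ≤ 0)
    (hγSA : ((∀ v, 0 ≤ γSA v) ∧ ∀ v ∉ S ∪ A, γSA v = 0) ∧
      ∀ x : EuclideanSpace ℝ (Fin N), ((∀ v, 0 ≤ x v) ∧ ∀ v ∉ S ∪ A, x v = 0) →
        g x ≤ g γSA) :
    (g γSA - g 0) - (g γS - g 0)
      ≤ 1 / (2 * u) * ∑ j ∈ A, (max (gradient g γS j) 0) ^ 2 := by
  obtain ⟨⟨hSnonneg, hSsupp⟩, -⟩ := hγS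
  obtain ⟨⟨hSAnonneg, hSAsupp⟩, -⟩ := hγSA
  have hcardS := (card_filter_ne_zero_le hSsupp).trans (hcard ▸ Nat.le_add_right _ _)
  have hcardSA := (card_filter_ne_zero_le hSAsupp).trans (card_union_of_disjoint hdisj ▸ hcard).le
  set d := gradient g γS
  set term := fun j => d j * (γSA j - γS j) - u / 2 * (γSA j - γS j) ^ 2
  have hA : ∀ j ∈ A, term j ≤ max (d j) 0 ^ 2 / (2 * u) := fun j hj =>
    mul_sub_half_mul_sq_le hu (by simpa [hSsupp j (disjoint_right.mp hdisj hj)] using hSAnonneg j)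
  have hAc : ∀ j ∈ Aᶜ, term j ≤ 0 := fun j hj => by
    refine mul_sub_half_mul_sq_nonpos hu.le ?_
    by_cases hjS : j ∈ S
    · exact mul_sub_nonpos_of_complementary_slackness (hSnonneg j) (hKKT₁ j) (hKKT₂ j hjS)
        (hSAnonneg j)
    · simp [hSsupp j hjS, hSAsupp j (by simp [hjS, mem_compl.mp hj])]
  calc (g γSA - g 0) - (g γS - g 0)
      ≤ inner ℝ d (γSA - γS) - u / 2 * ‖γSA - γS‖ ^ 2 := by
        linarith [hconc γS γSA hSnonneg hcardS hSAnonneg hcardSA]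
    _ = ∑ j ∈ A, term j + ∑ j ∈ Aᶜ, term j := by
        rw [sum_add_sum_compl, EuclideanSpace.inner_sub_mul_norm_sq_eq_sum]; rfl
    _ ≤ ∑ j ∈ A, max (d j) 0 ^ 2 / (2 * u) + 0 :=
        add_le_add (sum_le_sum hA) (sum_nonpos hAc)
    _ = 1 / (2 * u) * ∑ j ∈ A, max (d j) 0 ^ 2 := by
        rw [add_zero, mul_sum]; exact sum_congr rfl fun j _ => by ring

/-- Marginal-gain upper bound (Lemma A3, abstract form): if `g` is differentiable
and `u`-strongly concave on nonnegative vectors of sparsity at most `m̄`, and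
`γS`, `γSA` maximize `g` over nonnegative vectors supported on `S` and `S ∪ A`
respectively (with the KKT conditions at `γS`), then for disjoint `S, A` with
`|S| + |A| = m̄`:  `F(S∪A) - F(S) ≤ (1/(2u))·Σ_{j∈A}(max(∂_j g(γS), 0))²`. -/
theorem stmt_11 (N : ℕ) (g : EuclideanSpace ℝ (Fin N) → ℝ) (hg : Differentiable ℝ g)
    (u : ℝ) (hu : 0 < u) (mbar : ℕ)
    (hconc : ∀ x y : EuclideanSpace ℝ (Fin N),
      (∀ v, 0 ≤ x v) → (Finset.univ.filter (fun v => x v ≠ 0)).card ≤ mbar →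
      (∀ v, 0 ≤ y v) → (Finset.univ.filter (fun v => y v ≠ 0)).card ≤ mbar →
      g y ≤ g x + inner ℝ (gradient g x) (y - x) - u / 2 * ‖y - x‖ ^ 2)
    (S A : Finset (Fin N)) (hdisj : Disjoint S A) (hcard : S.card + A.card = mbar)
    (γS γSA : EuclideanSpace ℝ (Fin N))
    (hγS : ((∀ v, 0 ≤ γS v) ∧ ∀ v ∉ S, γS v = 0) ∧
      ∀ x : EuclideanSpace ℝ (Fin N), ((∀ v, 0 ≤ x v) ∧ ∀ v ∉ S, x v = 0) → g x ≤ g γS)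
    (hKKT₁ : ∀ j, 0 < γS j → gradient g γS j = 0)
    (hKKT₂ : ∀ j ∈ S, γS j = 0 → gradient g γS j ≤ 0)
    (hγSA : ((∀ v, 0 ≤ γSA v) ∧ ∀ v ∉ S ∪ A, γSA v = 0) ∧
      ∀ x : EuclideanSpace ℝ (Fin N), ((∀ v, 0 ≤ x v) ∧ ∀ v ∉ S ∪ A, x v = 0) →
        g x ≤ g γSA) :
    (g γSA - g 0) - (g γS - g 0)
      ≤ 1 / (2 * u) * ∑ j ∈ A, (max (gradient g γS j) 0) ^ 2 :=
  stmt_11_general N g u hu mbar hconc S A hdisj hcard γS γSA hγS hKKT₁ hKKT₂ hγSA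
end

section
/- Under the hypotheses of the two marginal-gain lemmas (per-coordinate smoothness Ũ₁ and restricted strong concavity u_{m̄} with m̄ = |S| + |A|), the set function F(S) = g(γ_S) - g(0) satisfies, for all disjoint S, A: Σ_{u∈A} [F(S ∪ {u}) - F(S)] ≥ (u_{m̄}/Ũ₁)·[F(S ∪ A) - F(S)]. In particular F is α-weakly submodular with α ≥ u_{2K}/Ũ₁ > 0 when all sets have cardinality at most K. -/
/-- Weak submodularity of the support-restricted value function (Lemma 1):
combining the marginal-gain lower bound (per-coordinate smoothness `Ũ₁`) and the
marginal-gain upper bound (restricted strong concavity `u_{m̄}` with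
`m̄ = |S| + |A|`), the set function `F` satisfies
`Σ_{u∈A}[F(S∪{u}) - F(S)] ≥ (u_{m̄}/Ũ₁)·[F(S∪A) - F(S)]` for disjoint `S, A`;
in particular `F` is `α`-weakly submodular with `α ≥ u_{2K}/Ũ₁ > 0` when the
sets involved have cardinality at most `K`. -/
theorem stmt_12 {V : Type*} [DecidableEq V] [Fintype V]
    (F : Finset V → ℝ) (gplus : Finset V → V → ℝ)
    (Utilde : ℝ) (hUtilde : 0 < Utilde)
    (usc : ℕ → ℝ) (husc_pos : ∀ k, 0 < usc k) (husc_anti : ∀ a b : ℕ, a ≤ b → usc b ≤ usc a)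
    (hmono : ∀ A B : Finset V, A ⊆ B → F A ≤ F B)
    (hlower : ∀ (S : Finset V) (u : V), u ∉ S →
      F (insert u S) - F S ≥ 1 / (2 * Utilde) * (gplus S u) ^ 2)
    (hupper : ∀ S A : Finset V, Disjoint S A →
      F (S ∪ A) - F S ≤ 1 / (2 * usc (S.card + A.card)) * ∑ u ∈ A, (gplus S u) ^ 2) :
    (∀ S A : Finset V, Disjoint S A →
      (∑ u ∈ A, (F (insert u S) - F S))
        ≥ (usc (S.card + A.card) / Utilde) * (F (S ∪ A) - F S)) ∧
    (∀ K : ℕ, ∀ S A : Finset V, Disjoint S A → S.card ≤ K → A.card ≤ K →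
      (0 < usc (2 * K) / Utilde ∧
       (∑ u ∈ A, (F (insert u S) - F S))
         ≥ (usc (2 * K) / Utilde) * (F (S ∪ A) - F S))) := by

  have main : ∀ S A : Finset V, Disjoint S A →
      (∑ u ∈ A, (F (insert u S) - F S))
        ≥ (usc (S.card + A.card) / Utilde) * (F (S ∪ A) - F S) := by
    intro S A hSA
    have hu := husc_pos (S.card + A.card)
    have h1 : (∑ u ∈ A, (F (insert u S) - F S))
        ≥ 1 / (2 * Utilde) * ∑ u ∈ A, (gplus S u) ^ 2 := by
      rw [Finset.mul_sum]
      apply Finset.sum_le_sum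
      intro u hu'
      exact hlower S u (fun h => (Finset.disjoint_left.mp hSA h hu'))
    have h2 := hupper S A hSA
    have key : (usc (S.card + A.card) / Utilde) * (F (S ∪ A) - F S)
        ≤ 1 / (2 * Utilde) * ∑ u ∈ A, (gplus S u) ^ 2 := by
      have := mul_le_mul_of_nonneg_left h2 (le_of_lt (div_pos hu hUtilde))
      calc (usc (S.card + A.card) / Utilde) * (F (S ∪ A) - F S)
          ≤ (usc (S.card + A.card) / Utilde) *
            (1 / (2 * usc (S.card + A.card)) * ∑ u ∈ A, (gplus S u) ^ 2) := this
        _ = 1 / (2 * Utilde) * ∑ u ∈ A, (gplus S u) ^ 2 := by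
            field_simp
    linarith
  refine ⟨main, fun K S A hSA hS hA => ⟨div_pos (husc_pos _) hUtilde, ?_⟩⟩
  have hD : 0 ≤ F (S ∪ A) - F S := by
    have := hmono S (S ∪ A) Finset.subset_union_left
    linarith
  have hle : usc (2 * K) ≤ usc (S.card + A.card) :=
    husc_anti _ _ (by omega)
  have h2 : (usc (2 * K) / Utilde) * (F (S ∪ A) - F S)
      ≤ (usc (S.card + A.card) / Utilde) * (F (S ∪ A) - F S) := by
    apply mul_le_mul_of_nonneg_right _ hD
    exact div_le_div_of_nonneg_right hle hUtilde.le
  exact le_trans h2 (main S A hSA)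
end

section
/- For w ∈ ℝ^m, λ₂ > 0, and B_K = {z ∈ ℝ₊^m : ‖z‖₀ ≤ K}, the K-sparse conjugate Θ*(w) = max_{z ∈ B_K} ⟨w, z⟩ - (λ₂/2)‖z‖² equals (1/(2λ₂))·Σ_{i=1}^{K} (max(0, w_{π(i)}))², where π is a permutation sorting w in nonincreasing order (w_{π(1)} ≥ ... ≥ w_{π(m)}). Moreover a maximizer z* is given by z*_{π(i)} = max(0, w_{π(i)}/λ₂) for i ≤ K and z*_{π(i)} = 0 for i > K. -/
lemma key_ineq (w z lam₂ : ℝ) (hz : 0 ≤ z) (hl : 0 < lam₂) :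
    w * z - lam₂ / 2 * z ^ 2 ≤ (max 0 w) ^ 2 / (2 * lam₂) := by
  rw [le_div_iff₀ (by positivity)]
  nlinarith [sq_nonneg (lam₂ * z - max 0 w), le_max_right 0 w, le_max_left 0 w,
    mul_nonneg hl.le hz]

lemma key_eq (w lam₂ : ℝ) (hl : 0 < lam₂) :
    w * max 0 (w / lam₂) - lam₂ / 2 * (max 0 (w / lam₂)) ^ 2 = (max 0 w) ^ 2 / (2 * lam₂) := by
  rcases le_or_gt w 0 with h | h
  · rw [max_eq_left h, max_eq_left (div_nonpos_of_nonpos_of_nonneg h hl.le)]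
    simp
  · rw [max_eq_right h.le, max_eq_right (div_nonneg h.le hl.le)]
    field_simp
    ring

lemma strictMono_val_le {n m : ℕ} (f : Fin n → Fin m) (hf : StrictMono f) (k : Fin n) :
    (k : ℕ) ≤ (f k : ℕ) := by
  obtain ⟨j, hj⟩ := k
  induction j with
  | zero => simp
  | succ j ih =>
    have hj' : j < n := Nat.lt_of_succ_lt hj
    have h1 := ih hj'
    have h2 : f ⟨j, hj'⟩ < f ⟨j + 1, hj⟩ := hf (by simp [Fin.lt_def])
    have h3 := Fin.lt_def.1 h2
    simp only [Fin.val_mk] at h1 ⊢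
    omega

lemma sorted_sum_le (m K : ℕ) (hK : K ≤ m) (g : Fin m → ℝ) (hg0 : ∀ j, 0 ≤ g j)
    (hmono : ∀ i j : Fin m, i ≤ j → g j ≤ g i) (T : Finset (Fin m)) (hT : T.card ≤ K) :
    ∑ j ∈ T, g j ≤ ∑ j ∈ Finset.univ.filter (fun j : Fin m => (j : ℕ) < K), g j := by
  set n := T.card with hn
  have hmem : ∀ k : Fin n, T.orderEmbOfFin rfl k ∈ T := fun k => Finset.orderEmbOfFin_mem T rfl k
  have hinj : Function.Injective (T.orderEmbOfFin (rfl : T.card = n)) :=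
    (T.orderEmbOfFin rfl).injective
  have hsum : ∑ j ∈ T, g j = ∑ k : Fin n, g (T.orderEmbOfFin rfl k) := by
    rw [← Finset.sum_image (fun a _ b _ h => hinj h)]
    congr 1
    apply (Finset.eq_of_subset_of_card_le ?_ ?_).symm
    · intro x hx
      simp only [Finset.mem_image] at hx
      obtain ⟨k, _, rfl⟩ := hx
      exact hmem k
    · rw [Finset.card_image_of_injective _ hinj]
      simpa using hn.le
  rw [hsum]
  have hnK : n ≤ K := hT
  set emb : Fin n → Fin m := fun k => ⟨(k : ℕ), lt_of_lt_of_le k.2 (hnK.trans hK)⟩ with hemb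
  have hembinj : Function.Injective emb := by
    intro a b h
    simpa [hemb, Fin.ext_iff] using h
  have hstep : ∀ k : Fin n, g (T.orderEmbOfFin rfl k) ≤ g (emb k) := by
    intro k
    apply hmono
    exact Fin.le_def.2 (strictMono_val_le _ (T.orderEmbOfFin rfl).strictMono k)
  calc ∑ k : Fin n, g (T.orderEmbOfFin rfl k)
      ≤ ∑ k : Fin n, g (emb k) := Finset.sum_le_sum fun k _ => hstep k
    _ = ∑ j ∈ Finset.univ.image emb, g j :=
        (Finset.sum_image (fun a _ b _ h => hembinj h)).symm
    _ ≤ ∑ j ∈ Finset.univ.filter (fun j : Fin m => (j : ℕ) < K), g j := by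
        apply Finset.sum_le_sum_of_subset_of_nonneg
        · intro x hx
          simp only [Finset.mem_image] at hx
          obtain ⟨k, _, rfl⟩ := hx
          simp [hemb, lt_of_lt_of_le k.2 hnK]
        · exact fun j _ _ => hg0 j

lemma card_filter_lt_le (m K : ℕ) :
    (Finset.univ.filter (fun i : Fin m => (i : ℕ) < K)).card ≤ K := by
  have := Finset.card_le_card_of_injOn
    (s := Finset.univ.filter fun i : Fin m => (i : ℕ) < K) (t := Finset.range K)
    (fun i : Fin m => (i : ℕ))
    (fun a ha => by simpa using (Finset.mem_filter.1 ha).2)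
    (fun a _ b _ h => Fin.ext h)
  simpa using this

/-- The K-sparse conjugate `Θ*(w) = max_{z ∈ B_K} ⟨w,z⟩ - (λ₂/2)‖z‖²` equals
`(1/(2λ₂))·Σ_{i=1}^{K} (max(0, w_{π(i)}))²` for a sorting permutation `π`, and is
attained at `z*` supported on the top-`K` coordinates with `z* = max(0, w/λ₂)` there. -/
theorem stmt_16 (m K : ℕ) (hK : K ≤ m) (w : Fin m → ℝ) (lam₂ : ℝ) (hlam₂ : 0 < lam₂)
    (π : Equiv.Perm (Fin m)) (hπ : ∀ i j : Fin m, i ≤ j → w (π j) ≤ w (π i)) :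
    IsGreatest
      {y : ℝ | ∃ z : Fin m → ℝ, (∀ i, 0 ≤ z i) ∧
        (Finset.univ.filter (fun i => z i ≠ 0)).card ≤ K ∧
        y = (∑ i, w i * z i) - lam₂ / 2 * ∑ i, (z i) ^ 2}
      ((1 / (2 * lam₂)) * ∑ i ∈ Finset.univ.filter (fun i : Fin m => (i : ℕ) < K),
        (max 0 (w (π i))) ^ 2) ∧
    (let zstar : Fin m → ℝ := fun i => if ((π.symm i : Fin m) : ℕ) < K then max 0 (w i / lam₂) else 0
     (∀ i, 0 ≤ zstar i) ∧
     (Finset.univ.filter (fun i => zstar i ≠ 0)).card ≤ K ∧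
     (∑ i, w i * zstar i) - lam₂ / 2 * ∑ i, (zstar i) ^ 2
       = (1 / (2 * lam₂)) * ∑ i ∈ Finset.univ.filter (fun i : Fin m => (i : ℕ) < K),
           (max 0 (w (π i))) ^ 2) := by
  set zstar : Fin m → ℝ :=
    fun i => if ((π.symm i : Fin m) : ℕ) < K then max 0 (w i / lam₂) else 0 with hzstar
  -- nonnegativity of zstar
  have hz0 : ∀ i, 0 ≤ zstar i := by
    intro i
    simp only [hzstar]
    split
    · exact le_max_left 0 _
    · exact le_refl 0
  -- support bound for zstar
  have hzcard : (Finset.univ.filter (fun i => zstar i ≠ 0)).card ≤ K := by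
    have hsub : (Finset.univ.filter (fun i => zstar i ≠ 0)) ⊆
        (Finset.univ.filter (fun j : Fin m => (j : ℕ) < K)).image π := by
      intro i hi
      simp only [Finset.mem_filter, Finset.mem_univ, true_and] at hi
      have hlt : ((π.symm i : Fin m) : ℕ) < K := by
        by_contra hc
        exact hi (by simp [hzstar, hc])
      exact Finset.mem_image.2 ⟨π.symm i, by simp [hlt], by simp⟩
    calc (Finset.univ.filter (fun i => zstar i ≠ 0)).card
        ≤ ((Finset.univ.filter (fun j : Fin m => (j : ℕ) < K)).image π).card :=
          Finset.card_le_card hsub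
      _ ≤ (Finset.univ.filter (fun j : Fin m => (j : ℕ) < K)).card :=
          Finset.card_image_le
      _ ≤ K := card_filter_lt_le m K
  -- value attained at zstar
  have hval : (∑ i, w i * zstar i) - lam₂ / 2 * ∑ i, (zstar i) ^ 2
      = (1 / (2 * lam₂)) * ∑ i ∈ Finset.univ.filter (fun i : Fin m => (i : ℕ) < K),
          (max 0 (w (π i))) ^ 2 := by
    have h1 : ∑ i, w i * zstar i = ∑ j, w (π j) * zstar (π j) :=
      (Equiv.sum_comp π (fun i => w i * zstar i)).symm
    have h2 : ∑ i, (zstar i) ^ 2 = ∑ j, (zstar (π j)) ^ 2 :=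
      (Equiv.sum_comp π (fun i => (zstar i) ^ 2)).symm
    rw [h1, h2, Finset.mul_sum, ← Finset.sum_sub_distrib]
    have hterm : ∀ j : Fin m, w (π j) * zstar (π j) - lam₂ / 2 * (zstar (π j)) ^ 2
        = if (j : ℕ) < K then (max 0 (w (π j))) ^ 2 / (2 * lam₂) else 0 := by
      intro j
      simp only [hzstar, Equiv.symm_apply_apply]
      split
      · exact key_eq (w (π j)) lam₂ hlam₂
      · simp
    calc ∑ j, (w (π j) * zstar (π j) - lam₂ / 2 * (zstar (π j)) ^ 2)
        = ∑ j : Fin m, if (j : ℕ) < K then (max 0 (w (π j))) ^ 2 / (2 * lam₂) else 0 :=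
          Finset.sum_congr rfl fun j _ => hterm j
      _ = ∑ j ∈ Finset.univ.filter (fun j : Fin m => (j : ℕ) < K),
            (max 0 (w (π j))) ^ 2 / (2 * lam₂) := (Finset.sum_filter _ _).symm
      _ = (1 / (2 * lam₂)) * ∑ i ∈ Finset.univ.filter (fun i : Fin m => (i : ℕ) < K),
            (max 0 (w (π i))) ^ 2 := by
          rw [Finset.mul_sum]
          exact Finset.sum_congr rfl fun j _ => by ring
  refine ⟨⟨⟨zstar, hz0, hzcard, hval.symm⟩, ?_⟩, hz0, hzcard, hval⟩
  -- upper bound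
  rintro y ⟨z, hzn, hzc, rfl⟩
  set T := Finset.univ.filter (fun i => z i ≠ 0) with hT
  have hsplit : (∑ i, w i * z i) - lam₂ / 2 * ∑ i, (z i) ^ 2
      = ∑ i ∈ T, (w i * z i - lam₂ / 2 * (z i) ^ 2) := by
    rw [Finset.mul_sum, ← Finset.sum_sub_distrib]
    refine (Finset.sum_subset T.subset_univ ?_).symm
    intro x _ hx
    have : z x = 0 := by simpa [hT] using hx
    simp [this]
  rw [hsplit]
  set g : Fin m → ℝ := fun j => (max 0 (w (π j))) ^ 2 / (2 * lam₂) with hg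
  have step1 : ∑ i ∈ T, (w i * z i - lam₂ / 2 * (z i) ^ 2)
      ≤ ∑ i ∈ T, (max 0 (w i)) ^ 2 / (2 * lam₂) :=
    Finset.sum_le_sum fun i _ => key_ineq (w i) (z i) lam₂ (hzn i) hlam₂
  have step2 : ∑ i ∈ T, (max 0 (w i)) ^ 2 / (2 * lam₂) = ∑ j ∈ T.image π.symm, g j := by
    rw [Finset.sum_image (fun a _ b _ h => π.symm.injective h)]
    exact Finset.sum_congr rfl fun i _ => by simp [hg]
  have step3 : ∑ j ∈ T.image π.symm, g j
      ≤ ∑ j ∈ Finset.univ.filter (fun j : Fin m => (j : ℕ) < K), g j := by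
    apply sorted_sum_le m K hK g
    · intro j; positivity
    · intro i j hij
      have hw := hπ i j hij
      have : max 0 (w (π j)) ≤ max 0 (w (π i)) := max_le_max le_rfl hw
      have hsq : (max 0 (w (π j))) ^ 2 ≤ (max 0 (w (π i))) ^ 2 :=
        pow_le_pow_left₀ (le_max_left 0 _) this 2
      simp only [hg]
      gcongr
    · calc (T.image π.symm).card ≤ T.card := Finset.card_image_le
        _ ≤ K := hzc
  have step4 : ∑ j ∈ Finset.univ.filter (fun j : Fin m => (j : ℕ) < K), g j
      = (1 / (2 * lam₂)) * ∑ i ∈ Finset.univ.filter (fun i : Fin m => (i : ℕ) < K),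
          (max 0 (w (π i))) ^ 2 := by
    rw [Finset.mul_sum]
    exact Finset.sum_congr rfl fun j _ => by simp [hg]; ring
  calc ∑ i ∈ T, (w i * z i - lam₂ / 2 * (z i) ^ 2)
      ≤ ∑ i ∈ T, (max 0 (w i)) ^ 2 / (2 * lam₂) := step1
    _ = ∑ j ∈ T.image π.symm, g j := step2
    _ ≤ ∑ j ∈ Finset.univ.filter (fun j : Fin m => (j : ℕ) < K), g j := step3
    _ = _ := step4
end

section
/- Weak duality for the sparse UOT primal-dual pair: for any feasible γ ≥ 0 with all columns in B_{K} and any α ∈ ℝ^m, β ∈ ℝ^n, P(γ) ≥ D(α, β), where P(γ) = ⟨C, γ⟩ + Σ_j [(λ₂/2)‖γ_j‖²] + λ₁(‖γ1 - μ‖²_{G₁} + ‖γᵀ1 - ν‖²_{G₂}) and D(α,β) = ⟨α, μ⟩ + ⟨β, ν⟩ - (1/(4λ₁))αᵀG₁⁻¹α - (1/(4λ₁))βᵀG₂⁻¹β - Σ_j Θ*(α + β_j·1 - C_j), with Θ*(w) = max_{z∈B_K}⟨w,z⟩ - (λ₂/2)‖z‖² and ‖v‖²_G = vᵀGv for positive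 definite G. -/
/-!
Weak duality is the sum of three Fenchel–Young inequalities. With `r = γ1 - μ` and
`s = γᵀ1 - ν`, the quadratic penalties are bounded below by their conjugates,
`λ rᵀG r + αᵀr ≥ -(4λ)⁻¹ αᵀG⁻¹α` (completing the square), and each column `γ_j ∈ B_K`
is admissible in the supremum defining `Θ*(α + β_j 1 - C_j)`. Adding the three bounds,
the coupling terms `αᵀγ1 + βᵀγᵀ1` cancel against `∑_j ⟨α + β_j 1, γ_j⟩`.
-/

open Matrix

/-- The K-sparse conjugate `Θ*(w) = max_{z ∈ B_K} ⟨w,z⟩ - (λ₂/2)‖z‖²`. -/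
noncomputable def ThetaStar (m K : ℕ) (lam₂ : ℝ) (w : Fin m → ℝ) : ℝ :=
  sSup {y : ℝ | ∃ z : Fin m → ℝ, (∀ i, 0 ≤ z i) ∧
    (Finset.univ.filter (fun i => z i ≠ 0)).card ≤ K ∧
    y = (∑ i, w i * z i) - lam₂ / 2 * ∑ i, (z i) ^ 2}

theorem Matrix.PosDef.neg_inv_quad_le {ι : Type*} [Fintype ι] [DecidableEq ι]
    {G : Matrix ι ι ℝ} (hG : G.PosDef) {lam : ℝ} (hlam : 0 < lam) (p a : ι → ℝ) :
    -(1 / (4 * lam) * (a ⬝ᵥ G⁻¹ *ᵥ a)) ≤ lam * (p ⬝ᵥ G *ᵥ p) + a ⬝ᵥ p := by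
  have hGinv : G *ᵥ (G⁻¹ *ᵥ a) = a := by
    rw [mulVec_mulVec, mul_nonsing_inv G ((isUnit_iff_isUnit_det G).1 hG.isUnit), one_mulVec]
  have hsymm : ∀ u v, u ⬝ᵥ G *ᵥ v = v ⬝ᵥ G *ᵥ u := fun u v => by
    rw [dotProduct_mulVec, ← mulVec_transpose, (isHermitian_iff_isSymm.1 hG.isHermitian).eq,
      dotProduct_comm]
  -- `v = 2 lam (p - p₀)` for the minimiser `p₀ = -(2 lam)⁻¹ G⁻¹ a`
  set v := (2 * lam) • p + G⁻¹ *ᵥ a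
  have hsq : v ⬝ᵥ G *ᵥ v
      = 4 * lam ^ 2 * (p ⬝ᵥ G *ᵥ p) + 4 * lam * (a ⬝ᵥ p) + a ⬝ᵥ G⁻¹ *ᵥ a := by
    simp only [v, mulVec_add, mulVec_smul, add_dotProduct, dotProduct_add, smul_dotProduct,
      dotProduct_smul, hGinv, hsymm (G⁻¹ *ᵥ a) p, smul_eq_mul]
    rw [dotProduct_comm p a, dotProduct_comm (G⁻¹ *ᵥ a) a]
    ring
  have hnonneg : 0 ≤ v ⬝ᵥ G *ᵥ v := hG.posSemidef.dotProduct_mulVec_nonneg v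
  rw [hsq] at hnonneg
  rw [neg_le, ← sub_nonneg]
  field_simp
  nlinarith

theorem le_ThetaStar {m K : ℕ} {lam₂ : ℝ} (hlam₂ : 0 < lam₂) (w z : Fin m → ℝ)
    (hz : ∀ i, 0 ≤ z i) (hzK : (Finset.univ.filter (fun i => z i ≠ 0)).card ≤ K) :
    (∑ i, w i * z i) - lam₂ / 2 * ∑ i, z i ^ 2 ≤ ThetaStar m K lam₂ w := by
  -- pointwise `w z - lam₂/2 z² ≤ w²/(2 lam₂)`, so the `sSup` is of a bounded set
  refine le_csSup ⟨∑ i, w i ^ 2 / (2 * lam₂), ?_⟩ ⟨z, hz, hzK, rfl⟩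
  rintro _ ⟨x, -, -, rfl⟩
  rw [Finset.mul_sum, ← Finset.sum_sub_distrib]
  refine Finset.sum_le_sum fun i _ => ?_
  rw [le_div_iff₀ (by positivity)]
  nlinarith [sq_nonneg (lam₂ * x i - w i)]

theorem sum_sum_add_sub_mul_eq_dotProduct_mulVec_one {ι κ : Type*} [Fintype ι] [Fintype κ]
    (γ C : Matrix ι κ ℝ) (α : ι → ℝ) (β : κ → ℝ) :
    ∑ j, ∑ i, (α i + β j - C i j) * γ i j
      = α ⬝ᵥ γ *ᵥ (fun _ => 1) + β ⬝ᵥ γᵀ *ᵥ (fun _ => 1) - ∑ i, ∑ j, C i j * γ i j := by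
  simp only [dotProduct, mulVec, transpose_apply, mul_one, Finset.mul_sum, add_mul, sub_mul,
    Finset.sum_add_distrib, Finset.sum_sub_distrib]
  rw [Finset.sum_comm (f := fun j i => α i * γ i j),
    Finset.sum_comm (f := fun j i => C i j * γ i j)]

/-- Weak duality for the sparse UOT primal-dual pair: for every feasible `γ`
(nonnegative with all columns `K`-sparse) and every `α, β`, `P(γ) ≥ D(α, β)`. -/
theorem stmt_17 (m n K : ℕ) (C : Matrix (Fin m) (Fin n) ℝ)
    (μ : Fin m → ℝ) (ν : Fin n → ℝ)
    (G₁ : Matrix (Fin m) (Fin m) ℝ) (G₂ : Matrix (Fin n) (Fin n) ℝ)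
    (hG₁ : G₁.PosDef) (hG₂ : G₂.PosDef)
    (lam₁ lam₂ : ℝ) (hlam₁ : 0 < lam₁) (hlam₂ : 0 < lam₂)
    (γ : Matrix (Fin m) (Fin n) ℝ) (hγpos : ∀ i j, 0 ≤ γ i j)
    (hγsparse : ∀ j : Fin n, (Finset.univ.filter (fun i => γ i j ≠ 0)).card ≤ K)
    (α : Fin m → ℝ) (β : Fin n → ℝ) :
    (∑ i, ∑ j, C i j * γ i j) + (∑ j, lam₂ / 2 * ∑ i, (γ i j) ^ 2)
      + lam₁ * ((γ.mulVec (fun _ => 1) - μ) ⬝ᵥ G₁.mulVec (γ.mulVec (fun _ => 1) - μ)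
          + (γ.transpose.mulVec (fun _ => 1) - ν) ⬝ᵥ
              G₂.mulVec (γ.transpose.mulVec (fun _ => 1) - ν))
    ≥ α ⬝ᵥ μ + β ⬝ᵥ ν - 1 / (4 * lam₁) * (α ⬝ᵥ G₁⁻¹.mulVec α)
      - 1 / (4 * lam₁) * (β ⬝ᵥ G₂⁻¹.mulVec β)
      - ∑ j, ThetaStar m K lam₂ (fun i => α i + β j - C i j) := by
  have hrow := hG₁.neg_inv_quad_le hlam₁ (γ *ᵥ (fun _ => 1) - μ) α
  have hcol := hG₂.neg_inv_quad_le hlam₁ (γᵀ *ᵥ (fun _ => 1) - ν) β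
  have hcolumns : ∑ j, (∑ i, (α i + β j - C i j) * γ i j - lam₂ / 2 * ∑ i, γ i j ^ 2)
      ≤ ∑ j, ThetaStar m K lam₂ (fun i => α i + β j - C i j) :=
    Finset.sum_le_sum fun j _ =>
      le_ThetaStar hlam₂ _ (fun i => γ i j) (fun i => hγpos i j) (hγsparse j)
  rw [Finset.sum_sub_distrib, sum_sum_add_sub_mul_eq_dotProduct_mulVec_one] at hcolumns
  rw [dotProduct_sub] at hrow hcol
  linarith
end

section
/- Let F be a monotone nonnegative set function that is α-weakly submodular (α ∈ (0,1]) in the sense that for all disjoint S, A: Σ_{u∈A} F(u|S) ≥ α·F(A|S). Consider the classical greedy sequence S₀ = ∅, S_i = S_{i-1} ∪ {argmax_u F(u|S_{i-1})} for i = 1,...,K. Then F(S_K) ≥ (1 - (1 - α/K)^K)·F(S*) ≥ (1 - e^{-α})·F(S*), where S* is any set of cardinality at most K. -/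
/-- Das–Kempe guarantee: the classical greedy algorithm applied to a monotone
nonnegative `α`-weakly submodular set function achieves
`F(S_K) ≥ (1 - (1 - α/K)^K)·F(S*) ≥ (1 - e^{-α})·F(S*)` for any `S*` with `|S*| ≤ K`. -/
theorem stmt_19 {V : Type*} [DecidableEq V] (F : Finset V → ℝ) (α : ℝ)
    (hα : α ∈ Set.Ioc (0:ℝ) 1)
    (hmono : ∀ A B : Finset V, A ⊆ B → F A ≤ F B)
    (hnonneg : ∀ A : Finset V, 0 ≤ F A)
    (hweak : ∀ S A : Finset V, Disjoint S A →
      (∑ u ∈ A, (F (insert u S) - F S)) ≥ α * (F (S ∪ A) - F S))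
    (K : ℕ) (hK : 0 < K) (S : ℕ → Finset V) (hS0 : S 0 = ∅)
    (hgreedy : ∀ i < K, ∃ u, u ∉ S i ∧ S (i + 1) = insert u (S i) ∧
      ∀ v ∉ S i, F (insert v (S i)) - F (S i) ≤ F (insert u (S i)) - F (S i))
    (Sstar : Finset V) (hSstar : Sstar.card ≤ K) :
    F (S K) ≥ (1 - (1 - α / K) ^ K) * F Sstar ∧
    F (S K) ≥ (1 - Real.exp (-α)) * F Sstar := by
  obtain ⟨hα0, hα1⟩ := hα
  have hKpos : (0:ℝ) < K := by exact_mod_cast hK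
  have hKα : α / K ≤ 1 := by
    rw [div_le_one hKpos]
    calc α ≤ 1 := hα1
    _ ≤ K := by exact_mod_cast hK
  have hfac0 : (0:ℝ) ≤ 1 - α / K := by linarith
  -- one greedy step
  have step : ∀ i < K, F Sstar - F (S (i+1)) ≤ (1 - α/K) * (F Sstar - F (S i)) := by
    intro i hi
    obtain ⟨u, hu, hSi1, hmax⟩ := hgreedy i hi
    set T := S i with hT
    set A := Sstar \ T with hA
    have hdisj : Disjoint T A := Finset.disjoint_sdiff
    have hsum := hweak T A hdisj
    set g := F (insert u T) - F T with hg
    have hg0 : 0 ≤ g := sub_nonneg.mpr (hmono T (insert u T) (Finset.subset_insert u T))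
    have hterm : ∀ v ∈ A, F (insert v T) - F T ≤ g := fun v hv =>
      hmax v (Finset.mem_sdiff.mp hv).2
    have hsum2 : (∑ v ∈ A, (F (insert v T) - F T)) ≤ (A.card : ℝ) * g := by
      calc ∑ v ∈ A, (F (insert v T) - F T) ≤ ∑ _v ∈ A, g := Finset.sum_le_sum hterm
      _ = (A.card : ℝ) * g := by rw [Finset.sum_const, nsmul_eq_mul]
    have hcard : (A.card : ℝ) ≤ (K : ℝ) := by
      exact_mod_cast le_trans (Finset.card_le_card Finset.sdiff_subset) hSstar
    have h2 : F Sstar ≤ F (T ∪ A) := by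
      apply hmono
      rw [hA, Finset.union_sdiff_self_eq_union]
      exact Finset.subset_union_right
    have hKg : α * (F Sstar - F T) ≤ (K:ℝ) * g := by
      have h1 : (A.card:ℝ) * g ≤ (K:ℝ) * g := mul_le_mul_of_nonneg_right hcard hg0
      have h3 : α * (F Sstar - F T) ≤ α * (F (T ∪ A) - F T) :=
        mul_le_mul_of_nonneg_left (by linarith) hα0.le
      linarith
    have hg' : (α / K) * (F Sstar - F T) ≤ g := by
      rw [div_mul_eq_mul_div, div_le_iff₀ hKpos]
      linarith
    have hexp : (1 - α/K) * (F Sstar - F T) =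
        (F Sstar - F T) - (α/K) * (F Sstar - F T) := by ring
    rw [hSi1]
    have hgdef : F (insert u T) = F T + g := by rw [hg]; ring
    rw [hgdef, hexp]
    linarith
  have main : ∀ i ≤ K, F Sstar - F (S i) ≤ (1 - α/K)^i * F Sstar := by
    intro i
    induction i with
    | zero =>
      intro _
      rw [pow_zero, one_mul, hS0]
      have := hnonneg (∅ : Finset V)
      linarith
    | succ n ih =>
      intro hn
      have hnK : n < K := hn
      have h1 := step n hnK
      have h2 := ih (le_of_lt hnK)
      calc F Sstar - F (S (n+1)) ≤ (1 - α/K) * (F Sstar - F (S n)) := h1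
      _ ≤ (1 - α/K) * ((1 - α/K)^n * F Sstar) := mul_le_mul_of_nonneg_left h2 hfac0
      _ = (1 - α/K)^(n+1) * F Sstar := by ring
  have hmainK := main K le_rfl
  have first : F (S K) ≥ (1 - (1 - α / K) ^ K) * F Sstar := by
    have : (1 - (1 - α / K) ^ K) * F Sstar = F Sstar - (1 - α/K)^K * F Sstar := by ring
    rw [this]
    linarith
  refine ⟨first, ?_⟩
  have h1 : 1 - α/K ≤ Real.exp (-(α/K)) := by
    have := Real.add_one_le_exp (-(α/K))
    linarith
  have h2 : (1 - α/K)^K ≤ (Real.exp (-(α/K)))^K := pow_le_pow_left₀ hfac0 h1 K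
  have h3 : (Real.exp (-(α/K)))^K = Real.exp (-α) := by
    rw [← Real.exp_nat_mul]
    congr 1
    field_simp
  have h4 : (1 - Real.exp (-α)) * F Sstar ≤ (1 - (1 - α / K) ^ K) * F Sstar := by
    apply mul_le_mul_of_nonneg_right _ (hnonneg Sstar)
    rw [← h3]
    linarith
  linarith
end
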